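/- Let $K \subset \mathbb{R}^2$ be a compact convex body whose support function $h(\vartheta) = \sup_{y \in K} \langle (\cos\vartheta, \sin\vartheta), y \rangle$ is twice continuously differentiable with $h(\vartheta) + h''(\vartheta) > 0$ for all $\vartheta$. Fix $\vartheta_0 \in \mathbb{R}$ and let $i(\vartheta) = h(\vartheta) n_\vartheta - \big(\int_{\vartheta_0}^{\vartheta} h(\tau)\,d\tau - h'(\vartheta_0)\big) t_\vartheta$ be the left involute of $\partial K$ starting at $i(\vartheta_0)$. Then the restriction of $i$ to $[\vartheta_0, \vartheta_0 + 3\pi/2]$ is a self-distancing curve: for all $\vartheta_0 \le \vartheta_1 \le \vartheta_2 \le \vartheta_3 \le \vartheta_0 + 3\pi/2$, $\|i(\vartheta_2) - i(\vartheta_1)\| \le \|i(\vartheta_3) - i(\vartheta_1)\|$. -/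

import Mathlib

open Real MeasureTheory

noncomputable def vec2 (a b : ℝ) : EuclideanSpace ℝ (Fin 2) :=
  (WithLp.equiv 2 (Fin 2 → ℝ)).symm ![a, b]

/-- The outer normal direction `n_ϑ = (cos ϑ, sin ϑ)`. -/
noncomputable def nvec (θ : ℝ) : EuclideanSpace ℝ (Fin 2) := vec2 (Real.cos θ) (Real.sin θ)

/-- The tangent direction `t_ϑ = (-sin ϑ, cos ϑ)`. -/
noncomputable def tvec (θ : ℝ) : EuclideanSpace ℝ (Fin 2) := vec2 (-Real.sin θ) (Real.cos θ)

/-!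
Differentiating the definition gives `i'(θ) = φ(θ) n_θ`, where `φ(θ) = ∫_{θ₀}^{θ} (h + h'') ≥ 0`
is the length of the unwound arc of `∂K`. Hence `(‖i(θ) - i(θ₁)‖²)' = 2 φ(θ) (h(θ) - ⟪n_θ, i(θ₁)⟫)`,
and it suffices that `⟪n_θ, i(τ)⟫ ≤ h(θ)` for `θ₀ ≤ τ ≤ θ ≤ θ₀ + 3π/2`. Write
`i(τ) = x(τ) - φ(τ) t_τ` with `x(τ) = h(τ) n_τ + h'(τ) t_τ ∈ K` the contact point. If `θ - τ ≤ π`,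
then `⟪n_θ, t_τ⟫ = sin (θ - τ) ≥ 0` and `⟪n_θ, x(τ)⟫ ≤ h(θ)` give the claim. If `θ - τ ≥ π`, then
`σ ↦ ⟪n_θ, i(σ)⟫` has derivative `φ(σ) cos (θ - σ) ≤ 0` on `[θ₀, τ]`, so
`⟪n_θ, i(τ)⟫ ≤ ⟪n_θ, i(θ₀)⟫ = ⟪n_θ, x(θ₀)⟫ ≤ h(θ)`.
-/

open Set
open scoped RealInnerProductSpace

@[simp] lemma vec2_apply_zero (a b : ℝ) : vec2 a b 0 = a := rfl
@[simp] lemma vec2_apply_one (a b : ℝ) : vec2 a b 1 = b := rfl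

lemma inner_vec2 (a b : ℝ) (y : EuclideanSpace ℝ (Fin 2)) :
    ⟪vec2 a b, y⟫ = a * y 0 + b * y 1 := by
  simp [vec2, PiLp.inner_apply, Fin.sum_univ_two, mul_comm]

lemma vec2_eq_smul_add_smul (a b : ℝ) : vec2 a b = a • vec2 1 0 + b • vec2 0 1 := by
  ext j; fin_cases j <;> simp

lemma nvec_eq_cos_smul_add_sin_smul (σ τ : ℝ) :
    nvec σ = cos (σ - τ) • nvec τ + sin (σ - τ) • tvec τ := by
  ext j; fin_cases j <;>
    simp only [nvec, tvec, Fin.zero_eta, Fin.mk_one, Fin.isValue, vec2_apply_zero, vec2_apply_one,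
      PiLp.add_apply, PiLp.smul_apply, smul_eq_mul, cos_sub, sin_sub]
  · linear_combination -cos σ * sin_sq_add_cos_sq τ
  · linear_combination -sin σ * sin_sq_add_cos_sq τ

lemma inner_nvec_nvec (σ τ : ℝ) : ⟪nvec σ, nvec τ⟫ = cos (σ - τ) := by
  simp only [nvec, inner_vec2, vec2_apply_zero, vec2_apply_one, cos_sub]

lemma inner_nvec_tvec (σ τ : ℝ) : ⟪nvec σ, tvec τ⟫ = sin (σ - τ) := by
  simp only [nvec, tvec, inner_vec2, vec2_apply_zero, vec2_apply_one, sin_sub]; ring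

lemma inner_nvec_smul_nvec_add_smul_tvec (σ τ a b : ℝ) :
    ⟪nvec σ, a • nvec τ + b • tvec τ⟫ = a * cos (σ - τ) + b * sin (σ - τ) := by
  rw [inner_add_right, real_inner_smul_right, real_inner_smul_right, inner_nvec_nvec,
    inner_nvec_tvec]

lemma hasDerivAt_nvec (θ : ℝ) : HasDerivAt nvec (tvec θ) θ := by
  rw [show nvec = fun θ => cos θ • vec2 1 0 + sin θ • vec2 0 1 from
    funext fun θ => vec2_eq_smul_add_smul _ _, tvec, vec2_eq_smul_add_smul (-sin θ)]
  exact ((hasDerivAt_cos θ).smul_const (vec2 1 0)).add ((hasDerivAt_sin θ).smul_const (vec2 0 1))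

lemma hasDerivAt_tvec (θ : ℝ) : HasDerivAt tvec (-nvec θ) θ := by
  rw [show tvec = fun θ => -sin θ • vec2 1 0 + cos θ • vec2 0 1 from
    funext fun θ => vec2_eq_smul_add_smul _ _, nvec, vec2_eq_smul_add_smul (cos θ), neg_add,
    ← neg_smul, ← neg_smul]
  exact ((hasDerivAt_sin θ).neg.smul_const (vec2 1 0)).add
    ((hasDerivAt_cos θ).smul_const (vec2 0 1))

def IsSupportFunction (K : Set (EuclideanSpace ℝ (Fin 2))) (h : ℝ → ℝ) : Prop :=
  ∀ θ, IsLUB ((fun y => ⟪nvec θ, y⟫) '' K) (h θ)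

theorem IsSupportFunction.mul_cos_add_deriv_mul_sin_le {K : Set (EuclideanSpace ℝ (Fin 2))}
    {h : ℝ → ℝ} (hK : IsSupportFunction K h) (hne : K.Nonempty) (hcp : IsCompact K) {τ : ℝ}
    (hτ : DifferentiableAt ℝ h τ) (σ : ℝ) :
    h τ * cos (σ - τ) + deriv h τ * sin (σ - τ) ≤ h σ := by
  obtain ⟨y, hyK, hy⟩ : ∃ y ∈ K, ⟪nvec τ, y⟫ = h τ :=
    (hK τ).mem_of_isClosed (hne.image _)
      (hcp.image (continuous_const.inner continuous_id)).isClosed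
  have hle : ∀ σ, ⟪nvec σ, y⟫ ≤ h σ := fun σ => (hK σ).1 (mem_image_of_mem _ hyK)
  have hmin : IsLocalMin (fun σ => h σ - ⟪nvec σ, y⟫) τ :=
    Filter.Eventually.of_forall fun σ => by simp only [hy, sub_self, sub_nonneg, hle σ]
  have hderiv : deriv h τ = ⟪tvec τ, y⟫ := by
    have := hmin.hasDerivAt_eq_zero
      (hτ.hasDerivAt.sub ((hasDerivAt_nvec τ).inner ℝ (hasDerivAt_const τ y)))
    simpa [sub_eq_zero] using this
  calc h τ * cos (σ - τ) + deriv h τ * sin (σ - τ) = ⟪nvec σ, y⟫ := by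
        rw [nvec_eq_cos_smul_add_sin_smul σ τ, inner_add_left, real_inner_smul_left,
          real_inner_smul_left, hy, hderiv]; ring
    _ ≤ h σ := hle σ

noncomputable def involute (h : ℝ → ℝ) (θ₀ θ : ℝ) : EuclideanSpace ℝ (Fin 2) :=
  h θ • nvec θ - ((∫ τ in θ₀..θ, h τ) - deriv h θ₀) • tvec θ

/-- For `h` of class `C²` this is `∫_{θ₀}^{θ} (h + h'')`, the length of the arc of `∂K` unwound by
the involute: `involute h θ₀ θ = h θ • nvec θ + deriv h θ • tvec θ - arcLength h θ₀ θ • tvec θ`. -/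
noncomputable def arcLength (h : ℝ → ℝ) (θ₀ θ : ℝ) : ℝ :=
  deriv h θ + ((∫ τ in θ₀..θ, h τ) - deriv h θ₀)

section Involute

variable {h : ℝ → ℝ} {θ₀ : ℝ}

theorem arcLength_self : arcLength h θ₀ θ₀ = 0 := by
  simp [arcLength]

theorem hasDerivAt_integral_sub_deriv (hc : Continuous h) (θ : ℝ) :
    HasDerivAt (fun θ => (∫ τ in θ₀..θ, h τ) - deriv h θ₀) (h θ) θ :=
  (intervalIntegral.integral_hasDerivAt_right (hc.intervalIntegrable θ₀ θ)
    (hc.stronglyMeasurableAtFilter _ _) hc.continuousAt).sub_const _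

theorem hasDerivAt_arcLength (hc : Continuous h) {θ : ℝ} (hd : DifferentiableAt ℝ (deriv h) θ) :
    HasDerivAt (arcLength h θ₀) (h θ + deriv (deriv h) θ) θ := by
  rw [add_comm]
  exact hd.hasDerivAt.add (hasDerivAt_integral_sub_deriv hc θ)

theorem arcLength_nonneg (hc : Continuous h) (hd : Differentiable ℝ (deriv h))
    (hpos : ∀ θ, 0 ≤ h θ + deriv (deriv h) θ) {θ : ℝ} (hθ : θ₀ ≤ θ) : 0 ≤ arcLength h θ₀ θ :=
  arcLength_self (h := h) ▸
    monotone_of_hasDerivAt_nonneg (fun θ => hasDerivAt_arcLength hc (hd θ)) hpos hθ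

theorem hasDerivAt_involute (hc : Continuous h) {θ : ℝ} (hd : DifferentiableAt ℝ h θ) :
    HasDerivAt (involute h θ₀) (arcLength h θ₀ θ • nvec θ) θ := by
  have := (hd.hasDerivAt.smul (hasDerivAt_nvec θ)).sub
    ((hasDerivAt_integral_sub_deriv (θ₀ := θ₀) hc θ).smul (hasDerivAt_tvec θ))
  refine this.congr_deriv ?_
  rw [arcLength]
  module

theorem inner_nvec_involute (θ τ : ℝ) :
    ⟪nvec θ, involute h θ₀ τ⟫ =
      h τ * cos (θ - τ) + (deriv h τ - arcLength h θ₀ τ) * sin (θ - τ) := by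
  rw [involute, sub_eq_add_neg, ← neg_smul, inner_nvec_smul_nvec_add_smul_tvec, arcLength]
  ring

theorem inner_nvec_involute_self (θ : ℝ) : ⟪nvec θ, involute h θ₀ θ⟫ = h θ := by
  simp [inner_nvec_involute]

theorem hasDerivAt_inner_nvec_involute (hc : Continuous h) {σ : ℝ} (hd : DifferentiableAt ℝ h σ)
    (θ : ℝ) :
    HasDerivAt (fun σ => ⟪nvec θ, involute h θ₀ σ⟫) (arcLength h θ₀ σ * cos (θ - σ)) σ := by
  refine ((hasDerivAt_const σ (nvec θ)).inner ℝ (hasDerivAt_involute hc hd)).congr_deriv ?_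
  rw [inner_zero_left, add_zero, real_inner_smul_right, inner_nvec_nvec]

variable {K : Set (EuclideanSpace ℝ (Fin 2))} (hK : IsSupportFunction K h) (hne : K.Nonempty)
  (hcp : IsCompact K) (hd : Differentiable ℝ h) (hdd : Differentiable ℝ (deriv h))
  (hpos : ∀ θ, 0 ≤ h θ + deriv (deriv h) θ)
include hK hne hcp hd hdd hpos

theorem inner_nvec_involute_le {τ θ : ℝ} (hτ : θ₀ ≤ τ) (hτθ : τ ≤ θ) (hθ : θ ≤ θ₀ + 3 * π / 2) :
    ⟪nvec θ, involute h θ₀ τ⟫ ≤ h θ := by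
  have hc := hd.continuous
  rcases le_total (θ - τ) π with hπ | hπ
  · have hsin : 0 ≤ sin (θ - τ) := sin_nonneg_of_nonneg_of_le_pi (by linarith) hπ
    rw [inner_nvec_involute]
    nlinarith [hK.mul_cos_add_deriv_mul_sin_le hne hcp (hd τ) θ,
      mul_nonneg (arcLength_nonneg hc hdd hpos hτ) hsin]
  · have hanti : AntitoneOn (fun σ => ⟪nvec θ, involute h θ₀ σ⟫) (Icc θ₀ τ) := by
      refine antitoneOn_of_hasDerivWithinAt_nonpos (convex_Icc _ _)
        (fun σ _ => (hasDerivAt_inner_nvec_involute hc (hd σ) θ).continuousAt.continuousWithinAt)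
        (fun σ _ => (hasDerivAt_inner_nvec_involute hc (hd σ) θ).hasDerivWithinAt)
        fun σ hσ => ?_
      rw [interior_Icc] at hσ
      exact mul_nonpos_of_nonneg_of_nonpos (arcLength_nonneg hc hdd hpos hσ.1.le)
        (cos_nonpos_of_pi_div_two_le_of_le (by linarith [hσ.2, pi_pos]) (by linarith [hσ.1]))
    calc ⟪nvec θ, involute h θ₀ τ⟫ ≤ ⟪nvec θ, involute h θ₀ θ₀⟫ :=
          hanti ⟨le_rfl, hτ⟩ ⟨hτ, le_rfl⟩ hτ
      _ = h θ₀ * cos (θ - θ₀) + deriv h θ₀ * sin (θ - θ₀) := by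
          rw [inner_nvec_involute, arcLength_self, sub_zero]
      _ ≤ h θ := hK.mul_cos_add_deriv_mul_sin_le hne hcp (hd θ₀) θ

theorem monotoneOn_norm_involute_sub {θ₁ : ℝ} (hθ₁ : θ₀ ≤ θ₁) :
    MonotoneOn (fun θ => ‖involute h θ₀ θ - involute h θ₀ θ₁‖) (Icc θ₁ (θ₀ + 3 * π / 2)) := by
  have hc := hd.continuous
  have hderiv : ∀ θ, HasDerivAt (fun θ => ‖involute h θ₀ θ - involute h θ₀ θ₁‖ ^ 2)
      (2 * (arcLength h θ₀ θ * (h θ - ⟪nvec θ, involute h θ₀ θ₁⟫))) θ := fun θ => by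
    refine ((hasDerivAt_involute hc (hd θ)).sub_const (involute h θ₀ θ₁)).norm_sq.congr_deriv ?_
    rw [real_inner_smul_right, inner_sub_left, real_inner_comm, inner_nvec_involute_self,
      real_inner_comm]
  have hsq : MonotoneOn (fun θ => ‖involute h θ₀ θ - involute h θ₀ θ₁‖ ^ 2)
      (Icc θ₁ (θ₀ + 3 * π / 2)) := by
    refine monotoneOn_of_hasDerivWithinAt_nonneg (convex_Icc _ _)
      (fun θ _ => (hderiv θ).continuousAt.continuousWithinAt)
      (fun θ _ => (hderiv θ).hasDerivWithinAt) fun θ hθ => ?_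
    rw [interior_Icc] at hθ
    have hφ := arcLength_nonneg hc hdd hpos (hθ₁.trans hθ.1.le)
    have hP := inner_nvec_involute_le hK hne hcp hd hdd hpos hθ₁ hθ.1.le hθ.2.le
    exact mul_nonneg zero_le_two (mul_nonneg hφ (sub_nonneg.2 hP))
  intro a ha b hb hab
  exact (sq_le_sq₀ (norm_nonneg _) (norm_nonneg _)).1 (hsq ha hb hab)

end Involute

theorem stmt_12_general (K : Set (EuclideanSpace ℝ (Fin 2)))
    (hne : K.Nonempty) (hcp : IsCompact K)
    (h : ℝ → ℝ)
    (hsupp : ∀ θ : ℝ, IsLUB ((fun y => (inner ℝ (nvec θ) y : ℝ)) '' K) (h θ))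
    (hsm : ContDiff ℝ 2 h) (hpos : ∀ θ, 0 < h θ + deriv (deriv h) θ)
    (θ₀ : ℝ) (i : ℝ → EuclideanSpace ℝ (Fin 2))
    (hi : ∀ θ, i θ = h θ • nvec θ - ((∫ τ in θ₀..θ, h τ) - deriv h θ₀) • tvec θ) :
    ∀ θ₁ θ₂ θ₃, θ₀ ≤ θ₁ → θ₁ ≤ θ₂ → θ₂ ≤ θ₃ → θ₃ ≤ θ₀ + 3 * Real.pi / 2 →
      ‖i θ₂ - i θ₁‖ ≤ ‖i θ₃ - i θ₁‖ := by
  intro θ₁ θ₂ θ₃ h01 h12 h23 h3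
  obtain rfl : i = involute h θ₀ := funext hi
  exact monotoneOn_norm_involute_sub hsupp hne hcp (hsm.differentiable two_ne_zero)
    hsm.differentiable_deriv_two (fun θ => (hpos θ).le) h01
    ⟨h12, h23.trans h3⟩ ⟨h12.trans h23, h3⟩ h23

/-- The restriction of the left involute to `[ϑ₀, ϑ₀ + 3π/2]` is a
self-distancing curve (SDC): for `ϑ₀ ≤ ϑ₁ ≤ ϑ₂ ≤ ϑ₃ ≤ ϑ₀ + 3π/2`,
`‖i(ϑ₂) - i(ϑ₁)‖ ≤ ‖i(ϑ₃) - i(ϑ₁)‖`. -/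
theorem stmt_12 (K : Set (EuclideanSpace ℝ (Fin 2)))
    (hne : K.Nonempty) (hcp : IsCompact K) (hcv : Convex ℝ K)
    (h : ℝ → ℝ)
    (hsupp : ∀ θ : ℝ, IsLUB ((fun y => (inner ℝ (nvec θ) y : ℝ)) '' K) (h θ))
    (hsm : ContDiff ℝ 2 h) (hpos : ∀ θ, 0 < h θ + deriv (deriv h) θ)
    (θ₀ : ℝ) (i : ℝ → EuclideanSpace ℝ (Fin 2))
    (hi : ∀ θ, i θ = h θ • nvec θ - ((∫ τ in θ₀..θ, h τ) - deriv h θ₀) • tvec θ) :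
    ∀ θ₁ θ₂ θ₃, θ₀ ≤ θ₁ → θ₁ ≤ θ₂ → θ₂ ≤ θ₃ → θ₃ ≤ θ₀ + 3 * Real.pi / 2 →
      ‖i θ₂ - i θ₁‖ ≤ ‖i θ₃ - i θ₁‖ :=
  stmt_12_general K hne hcp h hsupp hsm hpos θ₀ i hi
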